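/- Let i be in {1,...,n}, let lambda in a_Z* satisfy 0 < <lambda+rho, alpha_i^v> < l, and let nu in a_Z* satisfy <nu, alpha_i^v> >= 0. Then the element |l*s_i(nu) + s_i∘lambda> + |l*nu + s_i∘lambda> + t^{1/2}|l*s_i(nu) + lambda> + t^{1/2}|l*nu + lambda> of V belongs to I. (Case 2 of the proof of Proposition 1.1) -/

import Mathlib

open Finsupp LaurentPolynomial

noncomputable section

/-- The ring `K = ℤ[t^{1/2}, t^{-1/2}]`: Laurent polynomials over `ℤ` in the
variable `T = t^{1/2}`. -/
abbrev K : Type := LaurentPolynomial ℤ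

/-- The element `t^{1/2}` of `K`. -/
def tHalf : K := T 1

/-- The bar involution of `K`, determined by `t^{1/2} ↦ t^{-1/2}`. -/
def conjK : K →+* K := (LaurentPolynomial.invert (R := ℤ)).toRingHom

/-- `V`: the free `K`-module with basis `{|λ⟩ : λ ∈ a_ℤ^*}` indexed by the weight
lattice `Λ`. -/
abbrev V (Λ : Type) : Type := Λ →₀ K

/-- The basis element `|λ⟩` of `V`. -/
def ket {Λ : Type} (lam : Λ) : V Λ := Finsupp.single lam 1

/-- The data of (the weight lattice of) a reduced finite crystallographic root
system: the weight lattice `Λ = a_ℤ^*`, the (finite) Weyl group `W = W₀` acting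
on `Λ` through `σ`, the simple reflections `s i`, the simple roots `α i`, the
pairings `pair i = ⟨·, α_i^∨⟩` with the simple coroots, the finite set
`posRoots` of pairings `⟨·, α^∨⟩` with the coroots `α^∨` of the positive roots
`α ∈ R⁺`, the half-sum `ρ` of the positive roots (assumed to lie in `Λ`), the
longest element `w0` (of length `posRoots.card`), and the sign character `det`. -/
structure RootData (Λ W : Type) [AddCommGroup Λ] [Group W] [Fintype W] where
  n : ℕ
  σ : W →* Multiplicative (AddAut Λ)
  s : Fin n → W
  α : Fin n → Λ
  pair : Fin n → Λ →+ ℤ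
  posRoots : Finset (Λ →+ ℤ)
  ρ : Λ
  w0 : W
  det : W →* ℤˣ
  /-- `s i` acts on `Λ` as the reflection in the simple root `α i`. -/
  reflect : ∀ (i : Fin n) (lam : Λ), (Multiplicative.toAdd (σ (s i))) lam = lam - pair i lam • α i
  /-- crystallographic normalization `⟨α_i, α_i^∨⟩ = 2`. -/
  pair_alpha_self : ∀ i : Fin n, pair i (α i) = 2
  /-- the simple reflections are involutions. -/
  s_sq : ∀ i : Fin n, s i * s i = 1
  /-- `W₀` is generated by the simple reflections. -/
  gen_s : Subgroup.closure (Set.range s) = ⊤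
  /-- `⟨ρ, α_i^∨⟩ = 1` for every simple coroot. -/
  pair_rho : ∀ i : Fin n, pair i ρ = 1
  /-- each simple coroot is the coroot of a positive root. -/
  pair_mem : ∀ i : Fin n, pair i ∈ posRoots
  /-- the Weyl group permutes the (co)roots up to sign. -/
  roots_perm : ∀ (w : W), ∀ f ∈ posRoots,
    (∃ g ∈ posRoots, ∀ lam, f ((Multiplicative.toAdd (σ w)) lam) = g lam) ∨
    (∃ g ∈ posRoots, ∀ lam, f ((Multiplicative.toAdd (σ w)) lam) = - g lam)
  /-- `w0` sends every positive root to a negative root (so `w0` is the longest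
  element, of length `posRoots.card`). -/
  w0_neg : ∀ f ∈ posRoots, ∃ g ∈ posRoots, ∀ lam, f ((Multiplicative.toAdd (σ w0)) lam) = - g lam
  /-- `det` is the sign character. -/
  det_s : ∀ i : Fin n, det (s i) = -1

namespace RootData

variable {Λ W : Type} [AddCommGroup Λ] [Group W] [Fintype W]

/-- The dot action `w ∘ λ = w(λ + ρ) - ρ`. -/
def dot (D : RootData Λ W) (w : W) (lam : Λ) : Λ := (Multiplicative.toAdd (D.σ w)) (lam + D.ρ) - D.ρ

/-- `λ^{(1)} = λ - j • α_i`, where `⟨λ + ρ, α_i^∨⟩ = k l + j` with `j ∈ {0, …, l-1}`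
(relative to the index `i`). -/
def lamOne (D : RootData Λ W) (l : ℕ) (i : Fin D.n) (lam : Λ) : Λ :=
  lam - (D.pair i (lam + D.ρ) % (l : ℤ)) • D.α i

/-- A weight `λ` is dominant when `⟨λ + ρ, α_i^∨⟩ > 0` for all `i`. -/
def dominant (D : RootData Λ W) (lam : Λ) : Prop :=
  ∀ i : Fin D.n, 0 < D.pair i (lam + D.ρ)

/-- `λ₀ ∈ Π_l`: an `l`-restricted dominant weight. -/
def restricted (D : RootData Λ W) (l : ℕ) (lam : Λ) : Prop :=
  D.dominant lam ∧ ∀ i : Fin D.n, D.pair i lam ≤ (l : ℤ) - 1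

/-- The `K`-submodule `I` of `V` spanned by the straightening elements
(a), (b), (c). -/
def Idl (D : RootData Λ W) (l : ℕ) : Submodule K (V Λ) :=
  Submodule.span K
    ({x | ∃ (i : Fin D.n) (lam : Λ),
        (∃ k : ℤ, 0 ≤ k ∧ D.pair i (lam + D.ρ) = k * l) ∧
        x = ket (D.dot (D.s i) lam) + ket lam} ∪
     {x | ∃ (i : Fin D.n) (lam : Λ),
        0 < D.pair i (lam + D.ρ) ∧ D.pair i (lam + D.ρ) < (l : ℤ) ∧
        x = ket (D.dot (D.s i) lam) + tHalf • ket lam} ∪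
     {x | ∃ (i : Fin D.n) (lam : Λ),
        (l : ℤ) < D.pair i (lam + D.ρ) ∧ ¬ ((l : ℤ) ∣ D.pair i (lam + D.ρ)) ∧
        x = ket (D.dot (D.s i) lam) + tHalf • ket (D.dot (D.s i) (D.lamOne l i lam)) +
            ket (D.lamOne l i lam) + tHalf • ket lam})

/-- The operator `X^μ · : V → V` of the level `-(l+h)` action:
`X^μ · |γ⟩ = |γ - l w0(μ)⟩`. -/
def opX (D : RootData Λ W) (l : ℕ) (mu : Λ) : V Λ →ₗ[K] V Λ :=
  Finsupp.lmapDomain K K (fun gam => gam - l • (Multiplicative.toAdd (D.σ D.w0)) mu)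

/-- The level `-(l+h)` action of an element `g` of the group algebra `K[X]`
(with `K`-coefficients) on `V`. -/
def actKX (D : RootData Λ W) (l : ℕ) (g : Λ →₀ K) (v : V Λ) : V Λ :=
  g.sum fun mu c => c • (D.opX l mu v)

/-- The level `-(l+h)` action of an element `g` of `ℤ[X]` on `V`. -/
def actZX (D : RootData Λ W) (l : ℕ) (g : Λ →₀ ℤ) (v : V Λ) : V Λ :=
  g.sum fun mu c => c • (D.opX l mu v)

/-- `N_λ = #{α ∈ R⁺ : ⟨λ + ρ, α^∨⟩ ∈ lℤ}`. -/
def Ncount (D : RootData Λ W) (l : ℕ) (lam : Λ) : ℕ :=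
  (D.posRoots.filter (fun f => (l : ℤ) ∣ f (lam + D.ρ))).card

/-- The coefficient `(-1)^{l(w0)} (t^{-1/2})^{l(w0) - N_λ}` appearing in the bar
involution, where `l(w0) = Card R⁺`. -/
def barCoef (D : RootData Λ W) (l : ℕ) (lam : Λ) : K :=
  ((-1 : K) ^ D.posRoots.card) * T ((D.Ncount l lam : ℤ) - (D.posRoots.card : ℤ))

/-- The bar involution of `V`:
`bar(c|λ⟩) = c̄ (-1)^{l(w0)} (t^{-1/2})^{l(w0)-N_λ} |w0 ∘ λ⟩`. -/
def barV (D : RootData Λ W) (l : ℕ) (v : V Λ) : V Λ :=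
  v.sum fun lam c => (conjK c * D.barCoef l lam) • ket (D.dot D.w0 lam)

/-- `V⁺`: the `ℤ[t^{1/2}]`-span of the `|μ⟩` inside `V`, i.e. the elements all
of whose coefficients are polynomials in `t^{1/2}`. -/
def inVplus {Λ : Type} (b : V Λ) : Prop :=
  ∀ (mu : Λ) (m : ℤ), m < 0 → (b mu).coeff m = 0

/-- Membership in `I + t^{1/2} V⁺`. -/
def inIplus (D : RootData Λ W) (l : ℕ) (x : V Λ) : Prop :=
  ∃ a ∈ D.Idl l, ∃ b : V Λ, inVplus b ∧ x = a + tHalf • b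

/-- The Weyl numerator `∑_{w ∈ W₀} det(w) X^{w ν}` in `K[X]`. -/
def weylNumer (D : RootData Λ W) (nu : Λ) : AddMonoidAlgebra K Λ :=
  ∑ w : W, ((D.det w : ℤˣ) : ℤ) • AddMonoidAlgebra.single ((Multiplicative.toAdd (D.σ w)) nu) (1 : K)

/-- `g` is the Weyl character `s_ν ∈ ℤ[X]^{W₀} ⊆ K[X]`: it has integer
coefficients, is `W₀`-invariant, and satisfies the Weyl character formula
`(∑_w det(w) X^{wρ}) · s_ν = ∑_w det(w) X^{w(ν+ρ)}`. -/
def IsWeylChar (D : RootData Λ W) (nu : Λ) (g : AddMonoidAlgebra K Λ) : Prop :=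
  (∀ mu : Λ, ∃ z : ℤ, g.coeff mu = (z : K)) ∧
  (∀ (w : W) (mu : Λ), g.coeff ((Multiplicative.toAdd (D.σ w)) mu) = g.coeff mu) ∧
  D.weylNumer D.ρ * g = D.weylNumer (nu + D.ρ)

end RootData

end

/-! For `0 < m < l` with `m = ⟨λ+ρ, α_i^∨⟩`, translating `λ` by `lν` shifts the pairing to
`l⟨ν, α_i^∨⟩ + m`, whose residue mod `l` is still `m`. If `⟨ν, α_i^∨⟩ > 0` the element is then
exactly the straightening relation (c) at `lν + λ`, since `(lν + λ)^{(1)} = lν + s_i∘λ` and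
`s_i∘(lν + s_i∘λ) = l s_iν + λ`. If `⟨ν, α_i^∨⟩ = 0` then `s_iν = ν` and the element is twice
relation (b) at `lν + λ`. -/

namespace RootData

variable {Λ W : Type} [AddCommGroup Λ] [Group W] [Fintype W] (D : RootData Λ W)

theorem σ_s_apply_σ_s_apply (i : Fin D.n) (x : Λ) :
    Multiplicative.toAdd (D.σ (D.s i)) (Multiplicative.toAdd (D.σ (D.s i)) x) = x := by
  rw [← AddAut.add_apply, ← toAdd_mul, ← map_mul, D.s_sq, map_one, toAdd_one, AddAut.zero_apply]

theorem dot_add (w : W) (mu lam : Λ) :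
    D.dot w (mu + lam) = Multiplicative.toAdd (D.σ w) mu + D.dot w lam := by
  simp only [dot, add_assoc, map_add, add_sub_assoc]

theorem dot_s_dot_s (i : Fin D.n) (lam : Λ) : D.dot (D.s i) (D.dot (D.s i) lam) = lam := by
  rw [dot, dot, sub_add_cancel, σ_s_apply_σ_s_apply, add_sub_cancel_right]

theorem dot_s (i : Fin D.n) (lam : Λ) :
    D.dot (D.s i) lam = lam - D.pair i (lam + D.ρ) • D.α i := by
  rw [dot, D.reflect]
  abel

theorem pair_nsmul_add_add_rho (l : ℕ) (i : Fin D.n) (nu lam : Λ) :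
    D.pair i (l • nu + lam + D.ρ) = l * D.pair i nu + D.pair i (lam + D.ρ) := by
  rw [add_assoc, map_add, map_nsmul, nsmul_eq_mul]

theorem lamOne_nsmul_add {l : ℕ} {i : Fin D.n} {lam : Λ} (nu : Λ)
    (h0 : 0 ≤ D.pair i (lam + D.ρ)) (hl : D.pair i (lam + D.ρ) < l) :
    D.lamOne l i (l • nu + lam) = l • nu + D.dot (D.s i) lam := by
  rw [lamOne, pair_nsmul_add_add_rho, Int.mul_add_emod_self_left, Int.emod_eq_of_lt h0 hl,
    dot_s]
  abel

theorem straighten_b_mem_Idl {l : ℕ} (i : Fin D.n) (lam : Λ)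
    (h0 : 0 < D.pair i (lam + D.ρ)) (hl : D.pair i (lam + D.ρ) < l) :
    ket (D.dot (D.s i) lam) + tHalf • ket lam ∈ D.Idl l :=
  Submodule.subset_span (.inl (.inr ⟨i, lam, h0, hl, rfl⟩))

theorem straighten_c_mem_Idl {l : ℕ} (i : Fin D.n) (lam : Λ)
    (hl : l < D.pair i (lam + D.ρ)) (hdvd : ¬ (l : ℤ) ∣ D.pair i (lam + D.ρ)) :
    ket (D.dot (D.s i) lam) + tHalf • ket (D.dot (D.s i) (D.lamOne l i lam)) +
      ket (D.lamOne l i lam) + tHalf • ket lam ∈ D.Idl l :=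
  Submodule.subset_span (.inr ⟨i, lam, hl, hdvd, rfl⟩)

end RootData

theorem statement2_general {Λ W : Type} [AddCommGroup Λ] [Group W] [Fintype W]
    (D : RootData Λ W) (l : ℕ) (i : Fin D.n) (lam nu : Λ)
    (h1 : 0 < D.pair i (lam + D.ρ)) (h2 : D.pair i (lam + D.ρ) < (l : ℤ))
    (hnu : 0 ≤ D.pair i nu) :
    ket (l • (Multiplicative.toAdd (D.σ (D.s i))) nu + D.dot (D.s i) lam) +
      ket (l • nu + D.dot (D.s i) lam) +
      tHalf • ket (l • (Multiplicative.toAdd (D.σ (D.s i))) nu + lam) +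
      tHalf • ket (l • nu + lam) ∈ D.Idl l := by
  have hdot : D.dot (D.s i) (l • nu + lam) =
      l • Multiplicative.toAdd (D.σ (D.s i)) nu + D.dot (D.s i) lam := by
    rw [D.dot_add, map_nsmul]
  have hpair := D.pair_nsmul_add_add_rho l i nu lam
  rcases hnu.lt_or_eq with hpos | hzero
  · have hc := D.straighten_c_mem_Idl (l := l) i (l • nu + lam) (by rw [hpair]; nlinarith)
      (by rw [hpair, Int.dvd_add_right (dvd_mul_right _ _)]
          exact fun h => absurd (Int.le_of_dvd h1 h) (not_le.mpr h2))
    rw [D.lamOne_nsmul_add nu h1.le h2, hdot, D.dot_add, D.dot_s_dot_s, map_nsmul] at hc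
    convert hc using 1
    abel
  · have hfix : Multiplicative.toAdd (D.σ (D.s i)) nu = nu := by
      rw [D.reflect, ← hzero, zero_smul, sub_zero]
    rw [← hzero, mul_zero, zero_add] at hpair
    have hb := D.straighten_b_mem_Idl (l := l) i (l • nu + lam) (hpair ▸ h1) (hpair ▸ h2)
    rw [hdot, hfix] at hb
    rw [hfix]
    convert Submodule.add_mem _ hb hb using 1
    abel

/-- Case 2 of the proof of Proposition 1.1: if
`0 < ⟨λ+ρ, α_i^∨⟩ < l` and `⟨ν, α_i^∨⟩ ≥ 0` then
`|l s_iν + s_i∘λ⟩ + |lν + s_i∘λ⟩ + t^{1/2}|l s_iν + λ⟩ + t^{1/2}|lν + λ⟩ ∈ I`. -/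
theorem statement2 {Λ W : Type} [AddCommGroup Λ] [Group W] [Fintype W]
    (D : RootData Λ W) (l : ℕ) (hl : 0 < l) (i : Fin D.n) (lam nu : Λ)
    (h1 : 0 < D.pair i (lam + D.ρ)) (h2 : D.pair i (lam + D.ρ) < (l : ℤ))
    (hnu : 0 ≤ D.pair i nu) :
    ket (l • (Multiplicative.toAdd (D.σ (D.s i))) nu + D.dot (D.s i) lam) +
      ket (l • nu + D.dot (D.s i) lam) +
      tHalf • ket (l • (Multiplicative.toAdd (D.σ (D.s i))) nu + lam) +
      tHalf • ket (l • nu + lam) ∈ D.Idl l :=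
  statement2_general D l i lam nu h1 h2 hnu
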